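/- Let f : S → ℝ³ be a smooth immersion of a surface and g : S → ℝ³ smooth with df · dg = 0. Then there exists a unique smooth map h : S → ℝ³ such that dg(p)v = h(p) × df(p)v for all p ∈ S and v ∈ T_pS. -/

import Mathlib

open Matrix

section DarbouxAux


private lemma exA_id (a b u v : Fin 3 → ℝ) :
    ((((a ⨯₃ b) ⬝ᵥ v) • a - ((a ⨯₃ b) ⬝ᵥ u) • b + (b ⬝ᵥ u) • (a ⨯₃ b)) ⨯₃ a)
      = ((a ⨯₃ b) ⬝ᵥ (a ⨯₃ b)) • u - (a ⬝ᵥ u) • ((b ⬝ᵥ b) • a - (a ⬝ᵥ b) • b) := by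
  funext i
  fin_cases i <;>
    simp [cross_apply, dotProduct, Fin.sum_univ_three, Pi.smul_apply, Pi.sub_apply,
      Pi.add_apply, smul_eq_mul, Matrix.vecHead, Matrix.vecTail] <;> ring

private lemma exB_id (a b u v : Fin 3 → ℝ) :
    ((((a ⨯₃ b) ⬝ᵥ v) • a - ((a ⨯₃ b) ⬝ᵥ u) • b + (b ⬝ᵥ u) • (a ⨯₃ b)) ⨯₃ b)
      = ((a ⨯₃ b) ⬝ᵥ (a ⨯₃ b)) • v - (a ⬝ᵥ v + b ⬝ᵥ u) • ((b ⬝ᵥ b) • a - (a ⬝ᵥ b) • b)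
        - (b ⬝ᵥ v) • ((a ⬝ᵥ a) • b - (a ⬝ᵥ b) • a) := by
  funext i
  fin_cases i <;>
    simp [cross_apply, dotProduct, Fin.sum_univ_three, Pi.smul_apply, Pi.sub_apply,
      Pi.add_apply, smul_eq_mul, Matrix.vecHead, Matrix.vecTail] <;> ring

private lemma uniq_id (a b d : Fin 3 → ℝ) :
    ((a ⨯₃ b) ⬝ᵥ (a ⨯₃ b)) • d
      = (a ⨯₃ b) ⨯₃ ((d ⨯₃ a) ⨯₃ b - (d ⨯₃ b) ⨯₃ a) + ((d ⨯₃ a) ⬝ᵥ b) • (a ⨯₃ b) := by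
  funext i
  fin_cases i <;>
    simp [cross_apply, dotProduct, Fin.sum_univ_three, Pi.smul_apply, Pi.sub_apply,
      Pi.add_apply, smul_eq_mul, Matrix.vecHead, Matrix.vecTail] <;> ring

private lemma dep_of_cross_eq_zero (a b : Fin 3 → ℝ) (h : a ⨯₃ b = 0) (i : Fin 3) :
    b i • a - a i • b = 0 := by
  have h0 := congrFun h 0
  have h1 := congrFun h 1
  have h2 := congrFun h 2
  simp [cross_apply] at h0 h1 h2
  funext j
  fin_cases i <;> fin_cases j <;>
    simp [Pi.smul_apply, Pi.sub_apply, smul_eq_mul, Matrix.vecHead, Matrix.vecTail] <;> linarith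


private lemma smul_cross' (c : ℝ) (x y : Fin 3 → ℝ) : (c • x) ⨯₃ y = c • (x ⨯₃ y) := by
  funext i
  fin_cases i <;> simp [cross_apply, Matrix.vecHead, Matrix.vecTail] <;> ring

private lemma sub_cross' (x y z : Fin 3 → ℝ) : (x - y) ⨯₃ z = x ⨯₃ z - y ⨯₃ z := by
  funext i
  fin_cases i <;> simp [cross_apply, Matrix.vecHead, Matrix.vecTail] <;> ring

private lemma cross_add' (x y z : Fin 3 → ℝ) : x ⨯₃ (y + z) = x ⨯₃ y + x ⨯₃ z := by
  funext i
  fin_cases i <;> simp [cross_apply, Matrix.vecHead, Matrix.vecTail] <;> ring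

private lemma cross_smul' (c : ℝ) (x y : Fin 3 → ℝ) : x ⨯₃ (c • y) = c • (x ⨯₃ y) := by
  funext i
  fin_cases i <;> simp [cross_apply, Matrix.vecHead, Matrix.vecTail] <;> ring

private lemma zero_cross' (x : Fin 3 → ℝ) : (0 : Fin 3 → ℝ) ⨯₃ x = 0 := by
  funext i
  fin_cases i <;> simp [cross_apply, Matrix.vecHead, Matrix.vecTail]

private lemma contDiff_dot' {X Y : (Fin 2 → ℝ) → (Fin 3 → ℝ)}
    (hX : ContDiff ℝ (⊤ : ℕ∞) X) (hY : ContDiff ℝ (⊤ : ℕ∞) Y) :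
    ContDiff ℝ (⊤ : ℕ∞) fun p => X p ⬝ᵥ Y p := by
  simp only [dotProduct]
  exact ContDiff.sum fun i _ => (contDiff_pi.mp hX i).mul (contDiff_pi.mp hY i)

private lemma contDiff_cross' {X Y : (Fin 2 → ℝ) → (Fin 3 → ℝ)}
    (hX : ContDiff ℝ (⊤ : ℕ∞) X) (hY : ContDiff ℝ (⊤ : ℕ∞) Y) :
    ContDiff ℝ (⊤ : ℕ∞) fun p => X p ⨯₃ Y p := by
  apply contDiff_pi.mpr
  intro i
  fin_cases i <;>
    · simp only [cross_apply, Matrix.cons_val_zero, Matrix.cons_val_one, Matrix.head_cons,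
        Matrix.cons_val_two, Matrix.tail_cons]
      exact ((contDiff_pi.mp hX _).mul (contDiff_pi.mp hY _)).sub
        ((contDiff_pi.mp hX _).mul (contDiff_pi.mp hY _))

end DarbouxAux

/-- If `f : ℝ² → ℝ³` is a smooth immersion and `g` is a smooth infinitesimal
isometric deformation of `f` (i.e. `df · dg = 0`), then there is a unique smooth map
`h : ℝ² → ℝ³` with `dg = h × df`. -/
theorem darboux_stmt1
    (f g : (Fin 2 → ℝ) → (Fin 3 → ℝ))
    (hf : ContDiff ℝ (⊤ : ℕ∞) f) (hg : ContDiff ℝ (⊤ : ℕ∞) g)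
    (himm : ∀ p, Function.Injective (fderiv ℝ f p))
    (hiso : ∀ p (v : Fin 2 → ℝ), fderiv ℝ f p v ⬝ᵥ fderiv ℝ g p v = 0) :
    ∃! h : (Fin 2 → ℝ) → (Fin 3 → ℝ),
      ContDiff ℝ (⊤ : ℕ∞) h ∧
        ∀ p (v : Fin 2 → ℝ), fderiv ℝ g p v = h p ⨯₃ fderiv ℝ f p v := by
  classical
  set e₀ : Fin 2 → ℝ := Pi.single 0 1 with he₀
  set e₁ : Fin 2 → ℝ := Pi.single 1 1 with he₁
  have hdecomp : ∀ v : Fin 2 → ℝ, v = v 0 • e₀ + v 1 • e₁ := by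
    intro v; funext j; fin_cases j <;> simp [he₀, he₁, Pi.single_apply]
  set A : (Fin 2 → ℝ) → (Fin 3 → ℝ) := fun p => fderiv ℝ f p e₀ with hA_def
  set B : (Fin 2 → ℝ) → (Fin 3 → ℝ) := fun p => fderiv ℝ f p e₁ with hB_def
  set U : (Fin 2 → ℝ) → (Fin 3 → ℝ) := fun p => fderiv ℝ g p e₀ with hU_def
  set V : (Fin 2 → ℝ) → (Fin 3 → ℝ) := fun p => fderiv ℝ g p e₁ with hV_def
  set N : (Fin 2 → ℝ) → (Fin 3 → ℝ) := fun p => A p ⨯₃ B p with hN_def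
  set G : (Fin 2 → ℝ) → ℝ := fun p => N p ⬝ᵥ N p with hG_def
  set W : (Fin 2 → ℝ) → (Fin 3 → ℝ) :=
    fun p => (N p ⬝ᵥ V p) • A p - (N p ⬝ᵥ U p) • B p + (B p ⬝ᵥ U p) • N p with hW_def
  set h : (Fin 2 → ℝ) → (Fin 3 → ℝ) := fun p => (G p)⁻¹ • W p with hh_def
  -- orthogonality relations
  have hau : ∀ p, A p ⬝ᵥ U p = 0 := fun p => hiso p e₀
  have hbv : ∀ p, B p ⬝ᵥ V p = 0 := fun p => hiso p e₁
  have hpol : ∀ p, A p ⬝ᵥ V p + B p ⬝ᵥ U p = 0 := by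
    intro p
    have h2 := hiso p (e₀ + e₁)
    rw [(fderiv ℝ f p).map_add, (fderiv ℝ g p).map_add] at h2
    simp only [add_dotProduct, dotProduct_add] at h2
    have := hau p; have := hbv p
    change A p ⬝ᵥ U p + B p ⬝ᵥ U p + (A p ⬝ᵥ V p + B p ⬝ᵥ V p) = 0 at h2
    linarith
  -- nondegeneracy
  have hGne : ∀ p, G p ≠ 0 := by
    intro p hG0
    have hN0 : N p = 0 := dotProduct_self_eq_zero.mp hG0
    by_cases hA0 : A p = 0
    · have h1 : fderiv ℝ f p e₀ = fderiv ℝ f p 0 := by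
        rw [(fderiv ℝ f p).map_zero]; exact hA0
      have h2 := himm p h1
      have := congrFun h2 0
      simp [he₀] at this
    · obtain ⟨i, hi⟩ := Function.ne_iff.mp hA0
      have hd := dep_of_cross_eq_zero (A p) (B p) hN0 i
      set w : Fin 2 → ℝ := B p i • e₀ - A p i • e₁ with hw_def
      have h1 : fderiv ℝ f p w = fderiv ℝ f p 0 := by
        rw [(fderiv ℝ f p).map_zero, hw_def, (fderiv ℝ f p).map_sub,
          (fderiv ℝ f p).map_smul, (fderiv ℝ f p).map_smul]
        exact hd
      have h2 := himm p h1
      have h3 := congrFun h2 1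
      simp [hw_def, he₀, he₁, Pi.single_apply] at h3
      exact hi h3
  -- cross product equations
  have hWA : ∀ p, W p ⨯₃ A p = G p • U p := by
    intro p
    have := exA_id (A p) (B p) (U p) (V p)
    rw [hau p, zero_smul, sub_zero] at this
    exact this
  have hWB : ∀ p, W p ⨯₃ B p = G p • V p := by
    intro p
    have := exB_id (A p) (B p) (U p) (V p)
    rw [hpol p, hbv p, zero_smul, zero_smul, sub_zero, sub_zero] at this
    exact this
  have hhA : ∀ p, h p ⨯₃ A p = U p := by
    intro p
    rw [hh_def]
    show ((G p)⁻¹ • W p) ⨯₃ A p = U p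
    rw [smul_cross', hWA p, smul_smul, inv_mul_cancel₀ (hGne p), one_smul]
  have hhB : ∀ p, h p ⨯₃ B p = V p := by
    intro p
    rw [hh_def]
    show ((G p)⁻¹ • W p) ⨯₃ B p = V p
    rw [smul_cross', hWB p, smul_smul, inv_mul_cancel₀ (hGne p), one_smul]
  -- smoothness
  have hA : ContDiff ℝ (⊤ : ℕ∞) A := (hf.fderiv_right (by simp)).clm_apply contDiff_const
  have hB : ContDiff ℝ (⊤ : ℕ∞) B := (hf.fderiv_right (by simp)).clm_apply contDiff_const
  have hU : ContDiff ℝ (⊤ : ℕ∞) U := (hg.fderiv_right (by simp)).clm_apply contDiff_const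
  have hV : ContDiff ℝ (⊤ : ℕ∞) V := (hg.fderiv_right (by simp)).clm_apply contDiff_const
  have hN : ContDiff ℝ (⊤ : ℕ∞) N := contDiff_cross' hA hB
  have hG : ContDiff ℝ (⊤ : ℕ∞) G := contDiff_dot' hN hN
  have hW : ContDiff ℝ (⊤ : ℕ∞) W :=
    (((contDiff_dot' hN hV).smul hA).sub ((contDiff_dot' hN hU).smul hB)).add
      ((contDiff_dot' hB hU).smul hN)
  have hhsm : ContDiff ℝ (⊤ : ℕ∞) h := (hG.inv hGne).smul hW
  refine ⟨h, ⟨hhsm, ?_⟩, ?_⟩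
  · intro p v
    conv_lhs => rw [hdecomp v, (fderiv ℝ g p).map_add, (fderiv ℝ g p).map_smul,
      (fderiv ℝ g p).map_smul]
    conv_rhs => rw [hdecomp v, (fderiv ℝ f p).map_add, (fderiv ℝ f p).map_smul,
      (fderiv ℝ f p).map_smul]
    rw [cross_add', cross_smul', cross_smul', hhA p, hhB p]
  · rintro y ⟨-, hy⟩
    funext p
    have h1 : y p ⨯₃ A p = U p := (hy p e₀).symm
    have h2 : y p ⨯₃ B p = V p := (hy p e₁).symm
    have hd1 : (y p - h p) ⨯₃ A p = 0 := by rw [sub_cross', h1, hhA p, sub_self]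
    have hd2 : (y p - h p) ⨯₃ B p = 0 := by rw [sub_cross', h2, hhB p, sub_self]
    have hid := uniq_id (A p) (B p) (y p - h p)
    rw [hd1, hd2] at hid
    simp only [zero_cross', LinearMap.zero_apply, sub_self, zero_dotProduct, zero_smul, add_zero, map_zero] at hid
    have hz : y p - h p = 0 := by
      rcases smul_eq_zero.mp hid with hc | hc
      · exact absurd hc (hGne p)
      · exact hc
    exact sub_eq_zero.mp hz
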